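/- arXiv:1707.04136 — 2 statements merged into one kernel-verified Lean document; each statement's English description precedes it below -/
import Mathlib

section
/- Validity of the conditional randomization test: Suppose the finite set W⁺ of treatment assignments is partitioned into disjoint nonempty blocks W⁺_1, …, W⁺_B, each with positive probability under P. For w in block b, define the conditional p-value p_φ(w) = ∑_{v ∈ W⁺_b} 1{|t(v)| ≥ |t(w)|} P(v | W⁺_b). Then for any α ∈ [0,1], P({w : p_φ(w) ≤ α}) ≤ α. -/
open Finset

lemma crt_block_lemma {α' : Type*} [Fintype α'] [DecidableEq α'] (S : Finset α') (P : α' → ℝ)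
    (hP : ∀ w, 0 ≤ P w) (t : α' → ℝ) (c : ℝ) (hc : 0 ≤ c) :
    ∑ w ∈ S.filter (fun w => (∑ v ∈ S.filter (fun v => |t w| ≤ |t v|), P v) ≤ c), P w ≤ c := by
  classical
  set A := S.filter (fun w => (∑ v ∈ S.filter (fun v => |t w| ≤ |t v|), P v) ≤ c) with hA
  rcases A.eq_empty_or_nonempty with h | h
  · simp [h, hc]
  · obtain ⟨w0, hw0A, hmin⟩ := A.exists_min_image (fun w => |t w|) h
    have hsub : A ⊆ S.filter (fun v => |t w0| ≤ |t v|) := by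
      intro w hw
      have hwS : w ∈ S := (mem_filter.1 hw).1
      exact mem_filter.2 ⟨hwS, hmin w hw⟩
    calc ∑ w ∈ A, P w ≤ ∑ v ∈ S.filter (fun v => |t w0| ≤ |t v|), P v :=
          Finset.sum_le_sum_of_subset_of_nonneg hsub (fun i _ _ => hP i)
      _ ≤ c := (mem_filter.1 hw0A).2

/-- Validity of the conditional randomization test: with `W⁺` partitioned into blocks
(given by `β : α' → Fin B`), each of positive probability, the conditional p-value
`p_φ(w) = ∑_{v in block of w} 1{|t v| ≥ |t w|} P(v | block)` satisfies
`P(p_φ ≤ α) ≤ α`. -/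
theorem conditional_randomization_test_valid {α' : Type*} [Fintype α'] (B : ℕ)
    (P : α' → ℝ) (hP : ∀ w, 0 ≤ P w) (hsum : ∑ w, P w = 1)
    (β : α' → Fin B)
    (hpos : ∀ b : Fin B, 0 < ∑ v ∈ Finset.univ.filter (fun v => β v = b), P v)
    (t : α' → ℝ) (a : ℝ) (ha : a ∈ Set.Icc (0 : ℝ) 1) :
    ∑ w ∈ Finset.univ.filter (fun w =>
        (∑ v ∈ Finset.univ.filter (fun v => β v = β w ∧ |t w| ≤ |t v|), P v) /
          (∑ v ∈ Finset.univ.filter (fun v => β v = β w), P v) ≤ a),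
      P w ≤ a := by
  classical
  obtain ⟨ha0, ha1⟩ := ha
  set cond := fun w => (∑ v ∈ Finset.univ.filter (fun v => β v = β w ∧ |t w| ≤ |t v|), P v) /
          (∑ v ∈ Finset.univ.filter (fun v => β v = β w), P v) ≤ a with hcond
  have key : ∑ w ∈ Finset.univ.filter cond, P w
      = ∑ b : Fin B, ∑ w ∈ (Finset.univ.filter cond).filter (fun w => β w = b), P w :=
    (Finset.sum_fiberwise _ β P).symm
  rw [key]
  have hblocks : ∀ b : Fin B,
      ∑ w ∈ (Finset.univ.filter cond).filter (fun w => β w = b), P w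
        ≤ a * ∑ v ∈ Finset.univ.filter (fun v => β v = b), P v := by
    intro b
    set S := Finset.univ.filter (fun v => β v = b) with hS
    set T := ∑ v ∈ S, P v with hT
    have hTpos : 0 < T := hpos b
    have heq : (Finset.univ.filter cond).filter (fun w => β w = b)
        = S.filter (fun w => (∑ v ∈ S.filter (fun v => |t w| ≤ |t v|), P v) ≤ a * T) := by
      ext w
      simp only [Finset.mem_filter, Finset.mem_univ, true_and, hS, Finset.filter_filter]
      constructor
      · rintro ⟨hc, hb⟩
        refine ⟨hb, ?_⟩
        simp only [hcond, hb] at hc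
        have : (∑ v ∈ Finset.univ.filter (fun v => β v = b ∧ |t w| ≤ |t v|), P v) ≤ a * T :=
          (div_le_iff₀ hTpos).1 hc
        simpa using this
      · rintro ⟨hb, hc⟩
        refine ⟨?_, hb⟩
        simp only [hcond, hb]
        rw [div_le_iff₀ hTpos]
        simpa using hc
    rw [heq]
    exact crt_block_lemma S P hP t (a * T) (mul_nonneg ha0 hTpos.le)
  calc ∑ b : Fin B, ∑ w ∈ (Finset.univ.filter cond).filter (fun w => β w = b), P w
      ≤ ∑ b : Fin B, a * ∑ v ∈ Finset.univ.filter (fun v => β v = b), P v :=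
        Finset.sum_le_sum (fun b _ => hblocks b)
    _ = a * ∑ b : Fin B, ∑ v ∈ Finset.univ.filter (fun v => β v = b), P v := by
        rw [Finset.mul_sum]
    _ = a * ∑ w, P w := by rw [Finset.sum_fiberwise _ β P]
    _ = a := by rw [hsum, mul_one]
end

section
/- Let T be a discrete real random variable taking finitely many values and F its CDF. Then the random variable p = 1 − F(T⁻), i.e., p(ω) = P(T ≥ T(ω)), satisfies P(p ≤ α) ≤ α for all α ∈ [0,1], with equality achievable when α equals an attained value of p. -/
/-- Discrete right-tail p-value: `p(ω) = P(T ≥ T(ω))` satisfies `P(p ≤ α) ≤ α` for all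
`α ∈ [0,1]`, with equality when `α` equals an attained p-value (assuming all points have
positive probability). -/
theorem discrete_pvalue_valid {Ω : Type*} [Fintype Ω]
    (P : Ω → ℝ) (hP : ∀ ω, 0 ≤ P ω) (hsum : ∑ ω, P ω = 1) (T : Ω → ℝ) :
    (∀ a : ℝ, 0 ≤ a → a ≤ 1 →
      ∑ ω ∈ Finset.univ.filter (fun ω =>
          (∑ x ∈ Finset.univ.filter (fun x => T ω ≤ T x), P x) ≤ a), P ω ≤ a) ∧
    ((∀ ω, 0 < P ω) → ∀ ω₀ : Ω,
      ∑ ω ∈ Finset.univ.filter (fun ω =>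
          (∑ x ∈ Finset.univ.filter (fun x => T ω ≤ T x), P x)
            ≤ ∑ x ∈ Finset.univ.filter (fun x => T ω₀ ≤ T x), P x), P ω
        = ∑ x ∈ Finset.univ.filter (fun x => T ω₀ ≤ T x), P x) := by
  classical
  set p : Ω → ℝ := fun ω => ∑ x ∈ Finset.univ.filter (fun x => T ω ≤ T x), P x with hp
  have hmono : ∀ ω ω' : Ω, T ω' ≤ T ω → p ω ≤ p ω' := by
    intro ω ω' h
    apply Finset.sum_le_sum_of_subset_of_nonneg
    · intro x hx
      simp only [Finset.mem_filter, Finset.mem_univ, true_and] at hx ⊢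
      exact h.trans hx
    · intro x _ _; exact hP x
  constructor
  · intro a _ _
    by_cases hne : (Finset.univ.filter (fun ω => p ω ≤ a)).Nonempty
    · obtain ⟨ω₁, hω₁, hmin⟩ := Finset.exists_min_image _ T hne
      simp only [Finset.mem_filter, Finset.mem_univ, true_and] at hω₁
      calc ∑ ω ∈ Finset.univ.filter (fun ω => p ω ≤ a), P ω
          ≤ ∑ ω ∈ Finset.univ.filter (fun ω => T ω₁ ≤ T ω), P ω := by
            apply Finset.sum_le_sum_of_subset_of_nonneg
            · intro x hx
              simp only [Finset.mem_filter, Finset.mem_univ, true_and]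
              exact hmin x hx
            · intro x _ _; exact hP x
        _ = p ω₁ := rfl
        _ ≤ a := hω₁
    · rw [Finset.not_nonempty_iff_eq_empty] at hne
      rw [hne, Finset.sum_empty]
      linarith
  · intro hpos ω₀
    have hset : Finset.univ.filter (fun ω => p ω ≤ p ω₀)
        = Finset.univ.filter (fun ω => T ω₀ ≤ T ω) := by
      ext ω
      simp only [Finset.mem_filter, Finset.mem_univ, true_and]
      constructor
      · intro h
        by_contra hlt
        push_neg at hlt
        have hstrict : p ω₀ < p ω := by
          apply Finset.sum_lt_sum_of_subset
          · intro x hx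
            simp only [Finset.mem_filter, Finset.mem_univ, true_and] at hx ⊢
            exact hlt.le.trans hx
          · exact Finset.mem_filter.mpr ⟨Finset.mem_univ ω, le_refl _⟩
          · simp only [Finset.mem_filter, Finset.mem_univ, true_and, not_le]
            exact hlt
          · exact hpos ω
          · intro x _ _; exact hP x
        linarith
      · intro h
        exact hmono ω ω₀ h
    rw [hset]
end
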